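/- arXiv:2108.11466 — 3 statements merged into one kernel-verified Lean document; each statement's English description precedes it below -/
import Mathlib

section
/- If λ1, λ2, λ3, λ4 are all nonzero, then the extended nested exchangeable correlation matrix R is invertible and its inverse is given explicitly by R^{−1} = (1/λ1) I_{MKL} − ((α0−α1)/(λ1 λ2)) I_{MK} ⊗ J_L − ((α1−α2)/(λ2 λ3)) I_M ⊗ J_{KL} − (α2/(λ3 λ4)) J_{MKL}. -/
open Matrix Polynomial Finset

noncomputable section

/-- Extended nested exchangeable correlation matrix: the ((j,k,l),(j',k',l')) entry equals
1 if (j,k,l)=(j',k',l'), `a0` if j=j', k=k', l≠l', `a1` if j=j', k≠k', and `a2` if j≠j'. -/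
def Rmat (M K L : ℕ) (a0 a1 a2 : ℝ) :
    Matrix (Fin M × Fin K × Fin L) (Fin M × Fin K × Fin L) ℝ :=
  Matrix.of fun p q =>
    if p = q then 1
    else if p.1 = q.1 ∧ p.2.1 = q.2.1 then a0
    else if p.1 = q.1 then a1
    else a2

def lam1 (a0 : ℝ) : ℝ := 1 - a0

def lam2 (L : ℕ) (a0 a1 : ℝ) : ℝ := 1 + ((L : ℝ) - 1) * a0 - (L : ℝ) * a1

def lam3 (K L : ℕ) (a0 a1 a2 : ℝ) : ℝ :=
  1 + ((L : ℝ) - 1) * a0 + (L : ℝ) * ((K : ℝ) - 1) * a1 - (L : ℝ) * (K : ℝ) * a2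

def lam4 (M K L : ℕ) (a0 a1 a2 : ℝ) : ℝ :=
  1 + ((L : ℝ) - 1) * a0 + (L : ℝ) * ((K : ℝ) - 1) * a1
    + (L : ℝ) * (K : ℝ) * ((M : ℝ) - 1) * a2

/-! Let `P₁, P₂, P₃` be `fiberIndicator provider`, `fiberIndicator facility` and
`fiberIndicator whole`, the paper's `I_{MK} ⊗ J_L`, `I_M ⊗ J_{KL}` and `J_{MKL}`. They indicate
equality under successively coarser maps whose fibers have sizes `n₁ = L`, `n₂ = KL`, `n₃ = MKL`,
so `P_i * P_j = n_{min i j} • P_{max i j}`. Hence `R = λ₁ I + (α₀ - α₁) P₁ + (α₁ - α₂) P₂ + α₂ P₃`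
and the claimed inverse multiply inside the commutative algebra spanned by `I, P₁, P₂, P₃`, and
their product is `1` coefficient by coefficient thanks to the recursions `λ₂ = λ₁ + L (α₀ - α₁)`,
`λ₃ = λ₂ + KL (α₁ - α₂)`, `λ₄ = λ₃ + MKL α₂`. -/

namespace Matrix

variable {ι κ κ' R : Type*} [DecidableEq κ] [DecidableEq κ']

def fiberIndicator [Zero R] [One R] (f : ι → κ) : Matrix ι ι R :=
  of fun p q => if f p = f q then 1 else 0

theorem fiberIndicator_transpose [Zero R] [One R] (f : ι → κ) :
    (fiberIndicator f : Matrix ι ι R)ᵀ = fiberIndicator f := by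
  ext p q
  simp only [fiberIndicator, transpose_apply, of_apply, eq_comm]

variable [Fintype ι] [CommSemiring R] {c : ℕ}

theorem fiberIndicator_mul_fiberIndicator_of_coarser (f : ι → κ) (g : ι → κ')
    (hfg : ∀ p r, f p = f r → g p = g r) (hc : ∀ p, #{r | f p = f r} = c) :
    fiberIndicator f * fiberIndicator g = (c : R) • (fiberIndicator g : Matrix ι ι R) := by
  ext p q
  have hterm : ∀ r, (if f p = f r then 1 else 0 : R) * (if g r = g q then 1 else 0)
      = if f p = f r then (if g p = g q then 1 else 0) else 0 := by
    intro r
    by_cases h : f p = f r <;> simp [h, hfg p r]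
  simp only [fiberIndicator, mul_apply, of_apply, hterm, smul_apply, smul_eq_mul]
  rw [sum_ite, sum_const_zero, add_zero, sum_const, hc, nsmul_eq_mul]

theorem fiberIndicator_coarser_mul_fiberIndicator (f : ι → κ) (g : ι → κ')
    (hfg : ∀ p r, f p = f r → g p = g r) (hc : ∀ p, #{r | f p = f r} = c) :
    fiberIndicator g * fiberIndicator f = (c : R) • (fiberIndicator g : Matrix ι ι R) := by
  rw [← transpose_transpose (fiberIndicator g * fiberIndicator f), transpose_mul,
    fiberIndicator_transpose, fiberIndicator_transpose,
    fiberIndicator_mul_fiberIndicator_of_coarser f g hfg hc, transpose_smul,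
    fiberIndicator_transpose]

end Matrix

theorem Finset.card_filter_fst_eq {α β : Type*} [Fintype α] [Fintype β] [DecidableEq α]
    (a : α) : #{x : α × β | a = x.1} = Fintype.card β := by
  rw [← univ_product_univ, filter_product_left, card_product, filter_eq, if_pos (mem_univ a),
    card_singleton, one_mul, card_univ]

section NestedExchangeable

variable {M K L : ℕ}

def provider (p : Fin M × Fin K × Fin L) : Fin M × Fin K := (p.1, p.2.1)

def facility (p : Fin M × Fin K × Fin L) : Fin M := p.1

def whole (_ : Fin M × Fin K × Fin L) : Unit := ()

theorem card_facility_fiber (p : Fin M × Fin K × Fin L) :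
    #{r : Fin M × Fin K × Fin L | facility p = facility r} = K * L :=
  (card_filter_fst_eq p.1).trans (by simp)

theorem card_provider_fiber (p : Fin M × Fin K × Fin L) :
    #{r : Fin M × Fin K × Fin L | provider p = provider r} = L := by
  simp only [provider, Prod.mk.injEq]
  rw [← univ_product_univ, filter_product (p.1 = ·) (fun b : Fin K × Fin L => p.2.1 = b.1),
    card_product, filter_eq, if_pos (mem_univ _), card_singleton, one_mul, card_filter_fst_eq,
    Fintype.card_fin]

theorem card_whole_fiber (p : Fin M × Fin K × Fin L) :
    #{r : Fin M × Fin K × Fin L | whole p = whole r} = M * K * L := by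
  simp [whole, mul_assoc]

variable (M K L)

theorem Rmat_eq (a0 a1 a2 : ℝ) :
    Rmat M K L a0 a1 a2 = lam1 a0 • 1 + (a0 - a1) • fiberIndicator provider
      + (a1 - a2) • fiberIndicator facility + a2 • fiberIndicator whole := by
  ext p q
  simp only [Rmat, fiberIndicator, provider, facility, whole, lam1, Matrix.add_apply,
    Matrix.smul_apply, one_apply, of_apply, smul_eq_mul]
  split_ifs <;> simp_all [Prod.ext_iff]

def RmatInv (a0 a1 a2 : ℝ) : Matrix (Fin M × Fin K × Fin L) (Fin M × Fin K × Fin L) ℝ :=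
  (1 / lam1 a0) • 1
  - ((a0 - a1) / (lam1 a0 * lam2 L a0 a1)) • fiberIndicator provider
  - ((a1 - a2) / (lam2 L a0 a1 * lam3 K L a0 a1 a2)) • fiberIndicator facility
  - (a2 / (lam3 K L a0 a1 a2 * lam4 M K L a0 a1 a2)) • fiberIndicator whole

theorem Rmat_mul_RmatInv {a0 a1 a2 : ℝ} (h1 : lam1 a0 ≠ 0) (h2 : lam2 L a0 a1 ≠ 0)
    (h3 : lam3 K L a0 a1 a2 ≠ 0) (h4 : lam4 M K L a0 a1 a2 ≠ 0) :
    Rmat M K L a0 a1 a2 * RmatInv M K L a0 a1 a2 = 1 := by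
  have hPF : ∀ p r : Fin M × Fin K × Fin L, provider p = provider r → facility p = facility r :=
    fun _ _ h => (Prod.ext_iff.mp h).1
  simp only [Rmat_eq, RmatInv, add_mul, mul_sub, Matrix.smul_mul, Matrix.mul_smul, mul_one,
    one_mul, smul_smul,
    fiberIndicator_mul_fiberIndicator_of_coarser provider provider (fun _ _ => id)
      card_provider_fiber,
    fiberIndicator_mul_fiberIndicator_of_coarser provider facility hPF card_provider_fiber,
    fiberIndicator_coarser_mul_fiberIndicator provider facility hPF card_provider_fiber,
    fiberIndicator_mul_fiberIndicator_of_coarser provider whole (fun _ _ _ => rfl)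
      card_provider_fiber,
    fiberIndicator_coarser_mul_fiberIndicator provider whole (fun _ _ _ => rfl)
      card_provider_fiber,
    fiberIndicator_mul_fiberIndicator_of_coarser facility facility (fun _ _ => id)
      card_facility_fiber,
    fiberIndicator_mul_fiberIndicator_of_coarser facility whole (fun _ _ _ => rfl)
      card_facility_fiber,
    fiberIndicator_coarser_mul_fiberIndicator facility whole (fun _ _ _ => rfl)
      card_facility_fiber,
    fiberIndicator_mul_fiberIndicator_of_coarser whole whole (fun _ _ => id) card_whole_fiber]
  push_cast
  match_scalars <;> (field_simp <;> (simp only [lam1, lam2, lam3, lam4]; ring))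

theorem RmatInv_eq (a0 a1 a2 : ℝ) :
    RmatInv M K L a0 a1 a2 = of fun p q =>
      (if p = q then 1 / lam1 a0 else 0)
      - (if p.1 = q.1 ∧ p.2.1 = q.2.1 then (a0 - a1) / (lam1 a0 * lam2 L a0 a1) else 0)
      - (if p.1 = q.1 then (a1 - a2) / (lam2 L a0 a1 * lam3 K L a0 a1 a2) else 0)
      - a2 / (lam3 K L a0 a1 a2 * lam4 M K L a0 a1 a2) := by
  ext p q
  simp only [RmatInv, fiberIndicator, provider, facility, whole, Prod.mk.injEq,
    Matrix.sub_apply, Matrix.smul_apply, one_apply, of_apply, smul_eq_mul]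
  split_ifs <;> simp_all

end NestedExchangeable

theorem Rmat_inv_explicit_general (M K L : ℕ)
    (a0 a1 a2 : ℝ)
    (h1 : lam1 a0 ≠ 0) (h2 : lam2 L a0 a1 ≠ 0)
    (h3 : lam3 K L a0 a1 a2 ≠ 0) (h4 : lam4 M K L a0 a1 a2 ≠ 0) :
    IsUnit (Rmat M K L a0 a1 a2) ∧
    (Rmat M K L a0 a1 a2)⁻¹ = Matrix.of (fun p q =>
      (if p = q then 1 / lam1 a0 else 0)
      - (if p.1 = q.1 ∧ p.2.1 = q.2.1 then
          (a0 - a1) / (lam1 a0 * lam2 L a0 a1) else 0)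
      - (if p.1 = q.1 then
          (a1 - a2) / (lam2 L a0 a1 * lam3 K L a0 a1 a2) else 0)
      - a2 / (lam3 K L a0 a1 a2 * lam4 M K L a0 a1 a2) :
      Matrix (Fin M × Fin K × Fin L) (Fin M × Fin K × Fin L) ℝ) := by
  have hmul := Rmat_mul_RmatInv M K L h1 h2 h3 h4
  exact ⟨(isUnit_iff_isUnit_det _).mpr (isUnit_det_of_right_inverse hmul),
    (inv_eq_right_inv hmul).trans (RmatInv_eq M K L a0 a1 a2)⟩

/-- if `λ1, λ2, λ3, λ4` are nonzero then `Rmat` is invertible with explicit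
inverse `(1/λ1) I - ((a0-a1)/(λ1 λ2)) I_{MK} ⊗ J_L - ((a1-a2)/(λ2 λ3)) I_M ⊗ J_{KL}
- (a2/(λ3 λ4)) J_{MKL}`. -/
theorem Rmat_inv_explicit (M K L : ℕ) (hM : 2 ≤ M) (hK : 2 ≤ K) (hL : 2 ≤ L)
    (a0 a1 a2 : ℝ)
    (h1 : lam1 a0 ≠ 0) (h2 : lam2 L a0 a1 ≠ 0)
    (h3 : lam3 K L a0 a1 a2 ≠ 0) (h4 : lam4 M K L a0 a1 a2 ≠ 0) :
    IsUnit (Rmat M K L a0 a1 a2) ∧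
    (Rmat M K L a0 a1 a2)⁻¹ = Matrix.of (fun p q =>
      (if p = q then 1 / lam1 a0 else 0)
      - (if p.1 = q.1 ∧ p.2.1 = q.2.1 then
          (a0 - a1) / (lam1 a0 * lam2 L a0 a1) else 0)
      - (if p.1 = q.1 then
          (a1 - a2) / (lam2 L a0 a1 * lam3 K L a0 a1 a2) else 0)
      - a2 / (lam3 K L a0 a1 a2 * lam4 M K L a0 a1 a2) :
      Matrix (Fin M × Fin K × Fin L) (Fin M × Fin K × Fin L) ℝ) :=
  Rmat_inv_explicit_general M K L a0 a1 a2 h1 h2 h3 h4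
end
end

section
/- (Theorem 2, randomization at level 1) Let π ∈ (0,1) be such that πL is an integer, and let z ∈ {0,1}^{MKL} (coordinates indexed by triples (j,k,l)) be such that for every pair (j,k) exactly (1−π)L of the coordinates z_{jk1},…,z_{jkL} equal 1. Let ρc, ρt be nonzero real numbers, let P be the MKL×MKL diagonal matrix whose (j,k,l) diagonal entry is 1/ρc if z_{jkl} = 0 and 1/ρt if z_{jkl} = 1, and let X be the MKL×2 matrix with first column 1_{MKL} and second column z. Assume λ1, λ2, λ3, λ4 > 0 and define Σ1 = Xᵀ P R^{−1} P X. Then Σ1 is invertible and the lower-right entry of Σ1^{−1} equals (λ1/(MKL)) · (ρc²/π + ρt²/(1−π)) + (λ4 − λ1)(ρc − ρt)²/(MKL). -/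
open Matrix Polynomial Finset

noncomputable section

/-!
Let `E₁`, `E₂`, `E₃` be the averaging projections over the units of a provider, over the units
of a facility, and over the whole sample. They form a decreasing chain of commuting idempotents,
and `R = λ₁ (1 - E₁) + λ₂ (E₁ - E₂) + λ₃ (E₂ - E₃) + λ₄ E₃` is the spectral decomposition along
the orthogonal idempotents `1 - E₁, E₁ - E₂, E₂ - E₃, E₃`; hence `R⁻¹` is the same combination
of the `λᵢ⁻¹`. Randomization at level 1 gives every provider the same proportion of treated
units, so each column of `P X` has the same sum over every provider. Then `E₁`, `E₂`, `E₃` all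
act on `P X` alike, and `R⁻¹ P X = λ₁⁻¹ P X + (λ₄⁻¹ - λ₁⁻¹) E₃ P X`. Thus `Σ₁` is an explicit
`2 × 2` matrix of sample averages of functions of `z`, and inverting it gives the formula.
-/

section NestedProjections

variable {n m 𝕜 : Type*} [Fintype n] [DecidableEq n] [Field 𝕜]

/-- `c₁ (1 - E₁) + c₂ (E₁ - E₂) + c₃ (E₂ - E₃) + c₄ E₃`, written in the basis `1, E₁, E₂, E₃`. -/
def nestedCombo (E₁ E₂ E₃ : Matrix n n 𝕜) (c₁ c₂ c₃ c₄ : 𝕜) : Matrix n n 𝕜 :=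
  c₁ • 1 + (c₂ - c₁) • E₁ + (c₃ - c₂) • E₂ + (c₄ - c₃) • E₃

variable {E₁ E₂ E₃ : Matrix n n 𝕜}

theorem nestedCombo_mul_nestedCombo
    (h₁ : IsIdempotentElem E₁) (h₂ : IsIdempotentElem E₂) (h₃ : IsIdempotentElem E₃)
    (h₁₂ : E₁ * E₂ = E₂) (h₂₁ : E₂ * E₁ = E₂) (h₂₃ : E₂ * E₃ = E₃) (h₃₂ : E₃ * E₂ = E₃)
    (c₁ c₂ c₃ c₄ d₁ d₂ d₃ d₄ : 𝕜) :
    nestedCombo E₁ E₂ E₃ c₁ c₂ c₃ c₄ * nestedCombo E₁ E₂ E₃ d₁ d₂ d₃ d₄ =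
      nestedCombo E₁ E₂ E₃ (c₁ * d₁) (c₂ * d₂) (c₃ * d₃) (c₄ * d₄) := by
  have h₁₃ : E₁ * E₃ = E₃ := by rw [← h₂₃, ← mul_assoc, h₁₂]
  have h₃₁ : E₃ * E₁ = E₃ := by rw [← h₃₂, mul_assoc, h₂₁]
  simp only [nestedCombo, add_mul, mul_add, smul_mul_smul_comm, one_mul, mul_one, h₁.eq, h₂.eq,
    h₃.eq, h₁₂, h₂₁, h₂₃, h₃₂, h₁₃, h₃₁]
  module

theorem nestedCombo_inv
    (h₁ : IsIdempotentElem E₁) (h₂ : IsIdempotentElem E₂) (h₃ : IsIdempotentElem E₃)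
    (h₁₂ : E₁ * E₂ = E₂) (h₂₁ : E₂ * E₁ = E₂) (h₂₃ : E₂ * E₃ = E₃) (h₃₂ : E₃ * E₂ = E₃)
    {c₁ c₂ c₃ c₄ : 𝕜} (hc₁ : c₁ ≠ 0) (hc₂ : c₂ ≠ 0) (hc₃ : c₃ ≠ 0) (hc₄ : c₄ ≠ 0) :
    (nestedCombo E₁ E₂ E₃ c₁ c₂ c₃ c₄)⁻¹ = nestedCombo E₁ E₂ E₃ c₁⁻¹ c₂⁻¹ c₃⁻¹ c₄⁻¹ := by
  apply inv_eq_right_inv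
  rw [nestedCombo_mul_nestedCombo h₁ h₂ h₃ h₁₂ h₂₁ h₂₃ h₃₂, mul_inv_cancel₀ hc₁,
    mul_inv_cancel₀ hc₂, mul_inv_cancel₀ hc₃, mul_inv_cancel₀ hc₄]
  simp [nestedCombo]

theorem nestedCombo_mul_of_mul_eq (h₂₁ : E₂ * E₁ = E₂) (h₂₃ : E₂ * E₃ = E₃)
    {x : Matrix n m 𝕜} (hx : E₁ * x = E₃ * x) (c₁ c₂ c₃ c₄ : 𝕜) :
    nestedCombo E₁ E₂ E₃ c₁ c₂ c₃ c₄ * x = c₁ • x + (c₄ - c₁) • (E₃ * x) := by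
  have h₂x : E₂ * x = E₃ * x := by rw [← h₂₁, Matrix.mul_assoc, hx, ← Matrix.mul_assoc, h₂₃]
  simp only [nestedCombo, Matrix.add_mul, Matrix.smul_mul, Matrix.one_mul, hx, h₂x]
  module

end NestedProjections

section BlockMean

variable {n m β γ 𝕜 : Type*} [Fintype n] [DecidableEq β] [DecidableEq γ] [Field 𝕜]

def blockMean (f : n → β) : Matrix n n 𝕜 :=
  of fun p q => if f p = f q then ((univ.filter fun r => f r = f p).card : 𝕜)⁻¹ else 0

theorem blockMean_mul_apply (f : n → β) (A : Matrix n m 𝕜) (p : n) (i : m) :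
    ((blockMean f : Matrix n n 𝕜) * A) p i =
      ((univ.filter fun q => f q = f p).card : 𝕜)⁻¹ *
        ∑ q ∈ univ.filter (fun q => f q = f p), A q i := by
  rw [mul_apply, sum_filter, mul_sum]
  refine sum_congr rfl fun q _ => ?_
  by_cases h : f q = f p
  · simp [blockMean, h]
  · simp [blockMean, h, Ne.symm h]

theorem blockMean_transpose (f : n → β) : (blockMean f : Matrix n n 𝕜)ᵀ = blockMean f := by
  ext p q
  simp only [transpose_apply, blockMean, of_apply]
  split_ifs with h h' h' <;> simp_all [eq_comm]

variable [CharZero 𝕜] {f : n → β} {g : n → γ}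

theorem blockMean_mul_blockMean_of_refines (hfg : ∀ p q, f p = f q → g p = g q) :
    (blockMean f : Matrix n n 𝕜) * blockMean g = blockMean g := by
  ext p r
  have hconst : ∀ q ∈ univ.filter (fun q => f q = f p),
      (blockMean g : Matrix n n 𝕜) q r = blockMean g p r := by
    intro q hq
    have hgq := hfg q p (mem_filter.mp hq).2
    simp only [blockMean, of_apply, hgq]
  have hcard : ((univ.filter fun q => f q = f p).card : 𝕜) ≠ 0 :=
    Nat.cast_ne_zero.mpr (card_ne_zero_of_mem (mem_filter.mpr ⟨mem_univ p, rfl⟩))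
  rw [blockMean_mul_apply, sum_congr rfl hconst, sum_const, nsmul_eq_mul,
    inv_mul_cancel_left₀ hcard]

theorem blockMean_mul_blockMean_of_refines' (hfg : ∀ p q, f p = f q → g p = g q) :
    (blockMean g : Matrix n n 𝕜) * blockMean f = blockMean g := by
  rw [← blockMean_transpose f, ← blockMean_transpose g, ← transpose_mul,
    blockMean_mul_blockMean_of_refines hfg]

theorem isIdempotentElem_blockMean (f : n → β) :
    IsIdempotentElem (blockMean f : Matrix n n 𝕜) :=
  blockMean_mul_blockMean_of_refines fun _ _ => id

end BlockMean

theorem sum_filter_fst_eq {α β R : Type*} [Fintype α] [Fintype β] [DecidableEq α]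
    [AddCommMonoid R] (h : α × β → R) (a : α) :
    ∑ q ∈ univ.filter (fun q : α × β => q.1 = a), h q = ∑ b, h (a, b) := by
  rw [sum_filter, Fintype.sum_prod_type, Fintype.sum_eq_single a fun x hx => by simp [hx]]
  simp

section NestedExchangeable

variable {M K L : ℕ}

theorem sum_filter_provider_eq {R : Type*} [AddCommMonoid R] (h : Fin M × Fin K × Fin L → R)
    (j : Fin M) (k : Fin K) :
    ∑ q ∈ univ.filter (fun q : Fin M × Fin K × Fin L => (q.1, q.2.1) = (j, k)), h q =
      ∑ l, h (j, k, l) := by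
  simp only [Prod.mk.injEq, ← filter_filter]
  rw [sum_filter, sum_filter_fst_eq (fun q => if q.2.1 = k then h q else 0), ← sum_filter,
    sum_filter_fst_eq (fun y => h (j, y))]

/-- With `facilityMean` and `grandMean`: the paper's `L⁻¹ I_{MK} ⊗ J_L`, `(KL)⁻¹ I_M ⊗ J_{KL}` and
`(MKL)⁻¹ J_{MKL}`. -/
def providerMean (M K L : ℕ) : Matrix (Fin M × Fin K × Fin L) (Fin M × Fin K × Fin L) ℝ :=
  blockMean fun p => (p.1, p.2.1)

def facilityMean (M K L : ℕ) : Matrix (Fin M × Fin K × Fin L) (Fin M × Fin K × Fin L) ℝ :=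
  blockMean fun p => p.1

def grandMean (M K L : ℕ) : Matrix (Fin M × Fin K × Fin L) (Fin M × Fin K × Fin L) ℝ :=
  blockMean fun _ => ()

theorem card_filter_provider (j : Fin M) (k : Fin K) :
    #(univ.filter fun q : Fin M × Fin K × Fin L => (q.1, q.2.1) = (j, k)) = L := by
  rw [card_eq_sum_ones, sum_filter_provider_eq]
  simp

theorem card_filter_facility (j : Fin M) :
    #(univ.filter fun q : Fin M × Fin K × Fin L => q.1 = j) = K * L := by
  rw [card_eq_sum_ones, sum_filter_fst_eq]
  simp

theorem Rmat_eq_nestedCombo (a0 a1 a2 : ℝ) :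
    Rmat M K L a0 a1 a2 = nestedCombo (providerMean M K L) (facilityMean M K L) (grandMean M K L)
      (lam1 a0) (lam2 L a0 a1) (lam3 K L a0 a1 a2) (lam4 M K L a0 a1 a2) := by
  ext p q
  have hM : (M : ℝ) ≠ 0 := Nat.cast_ne_zero.mpr (Fin.pos p.1).ne'
  have hK : (K : ℝ) ≠ 0 := Nat.cast_ne_zero.mpr (Fin.pos p.2.1).ne'
  have hL : (L : ℝ) ≠ 0 := Nat.cast_ne_zero.mpr (Fin.pos p.2.2).ne'
  simp only [Rmat, nestedCombo, providerMean, facilityMean, grandMean, blockMean, of_apply,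
    Matrix.add_apply, Matrix.smul_apply, card_filter_provider, card_filter_facility]
  simp only [filter_true, card_univ, Fintype.card_prod, Fintype.card_fin, one_apply, lam1, lam2,
    lam3, lam4, Prod.mk.injEq]
  push_cast
  split_ifs <;> simp_all <;> field_simp <;> ring

theorem providerMean_mul_facilityMean :
    providerMean M K L * facilityMean M K L = facilityMean M K L :=
  blockMean_mul_blockMean_of_refines fun _ _ h => (Prod.mk.inj h).1

theorem facilityMean_mul_providerMean :
    facilityMean M K L * providerMean M K L = facilityMean M K L :=
  blockMean_mul_blockMean_of_refines' fun _ _ h => (Prod.mk.inj h).1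

theorem facilityMean_mul_grandMean :
    facilityMean M K L * grandMean M K L = grandMean M K L :=
  blockMean_mul_blockMean_of_refines fun _ _ _ => rfl

theorem grandMean_mul_facilityMean :
    grandMean M K L * facilityMean M K L = grandMean M K L :=
  blockMean_mul_blockMean_of_refines' fun _ _ _ => rfl

theorem Rmat_inv_mul_of_providerMean_mul_eq {a0 a1 a2 : ℝ} (h1 : lam1 a0 ≠ 0)
    (h2 : lam2 L a0 a1 ≠ 0) (h3 : lam3 K L a0 a1 a2 ≠ 0) (h4 : lam4 M K L a0 a1 a2 ≠ 0)
    {m : Type*} {G : Matrix (Fin M × Fin K × Fin L) m ℝ}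
    (hG : providerMean M K L * G = grandMean M K L * G) :
    (Rmat M K L a0 a1 a2)⁻¹ * G =
      (lam1 a0)⁻¹ • G + ((lam4 M K L a0 a1 a2)⁻¹ - (lam1 a0)⁻¹) • (grandMean M K L * G) := by
  rw [Rmat_eq_nestedCombo, nestedCombo_inv (E₁ := providerMean M K L) (E₂ := facilityMean M K L)
    (E₃ := grandMean M K L) (isIdempotentElem_blockMean _) (isIdempotentElem_blockMean _)
    (isIdempotentElem_blockMean _) providerMean_mul_facilityMean facilityMean_mul_providerMean
    facilityMean_mul_grandMean grandMean_mul_facilityMean h1 h2 h3 h4,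
    nestedCombo_mul_of_mul_eq facilityMean_mul_providerMean facilityMean_mul_grandMean hG]

end NestedExchangeable

theorem sum_comp_of_forall_eq_zero_or_one {ι : Type*} [Fintype ι] {z : ι → ℝ}
    (hz : ∀ i, z i = 0 ∨ z i = 1) (g : ℝ → ℝ) :
    ∑ i, g (z i) = (Fintype.card ι - #(univ.filter fun i => z i = 1)) * g 0
      + #(univ.filter fun i => z i = 1) * g 1 := by
  have hzero : ∀ i ∈ univ.filter (fun i => ¬z i = 1), g (z i) = g 0 := fun i hi =>
    by rw [(hz i).resolve_right (mem_filter.mp hi).2]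
  have hone : ∀ i ∈ univ.filter (fun i => z i = 1), g (z i) = g 1 := fun i hi =>
    by rw [(mem_filter.mp hi).2]
  rw [← sum_filter_add_sum_filter_not univ (fun i => z i = 1), sum_congr rfl hone,
    sum_congr rfl hzero, sum_const, sum_const, nsmul_eq_mul, nsmul_eq_mul,
    ← card_univ, ← card_filter_add_card_filter_not (s := univ) (fun i => z i = 1)]
  push_cast
  ring

section Level1Randomization

variable {M K L : ℕ} {π : ℝ} {z : Fin M × Fin K × Fin L → ℝ} {m : Type*}

theorem sum_units_comp_of_level1 (hz : ∀ p, z p = 0 ∨ z p = 1)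
    (hcard : ∀ j k, ((univ.filter fun l => z (j, k, l) = 1).card : ℝ) = (1 - π) * L)
    (g : ℝ → ℝ) (j : Fin M) (k : Fin K) :
    ∑ l, g (z (j, k, l)) = L * (π * g 0 + (1 - π) * g 1) := by
  rw [sum_comp_of_forall_eq_zero_or_one (fun l => hz (j, k, l)), hcard, Fintype.card_fin]
  ring

theorem sum_comp_of_level1 (hz : ∀ p, z p = 0 ∨ z p = 1)
    (hcard : ∀ j k, ((univ.filter fun l => z (j, k, l) = 1).card : ℝ) = (1 - π) * L)
    (g : ℝ → ℝ) :
    ∑ p, g (z p) = M * K * L * (π * g 0 + (1 - π) * g 1) := by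
  simp only [Fintype.sum_prod_type, sum_units_comp_of_level1 hz hcard, sum_const, card_univ,
    Fintype.card_fin, nsmul_eq_mul]
  ring

theorem providerMean_mul_comp_apply (hz : ∀ p, z p = 0 ∨ z p = 1)
    (hcard : ∀ j k, ((univ.filter fun l => z (j, k, l) = 1).card : ℝ) = (1 - π) * L)
    (φ : m → ℝ → ℝ) (p : Fin M × Fin K × Fin L) (i : m) :
    (providerMean M K L * of fun p i => φ i (z p)) p i = π * φ i 0 + (1 - π) * φ i 1 := by
  have hL : (L : ℝ) ≠ 0 := Nat.cast_ne_zero.mpr (Fin.pos p.2.2).ne'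
  rw [providerMean, blockMean_mul_apply, card_filter_provider, sum_filter_provider_eq]
  simp only [of_apply]
  rw [sum_units_comp_of_level1 hz hcard, inv_mul_cancel_left₀ hL]

theorem grandMean_mul_comp_apply (hz : ∀ p, z p = 0 ∨ z p = 1)
    (hcard : ∀ j k, ((univ.filter fun l => z (j, k, l) = 1).card : ℝ) = (1 - π) * L)
    (φ : m → ℝ → ℝ) (p : Fin M × Fin K × Fin L) (i : m) :
    (grandMean M K L * of fun p i => φ i (z p)) p i = π * φ i 0 + (1 - π) * φ i 1 := by
  have hMKL : (M * K * L : ℝ) ≠ 0 := by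
    have := Fin.pos p.1; have := Fin.pos p.2.1; have := Fin.pos p.2.2
    positivity
  rw [grandMean, blockMean_mul_apply, filter_true_of_mem fun _ _ => rfl, card_univ]
  simp only [of_apply, Fintype.card_prod, Fintype.card_fin, Nat.cast_mul, ← mul_assoc]
  rw [sum_comp_of_level1 hz hcard, inv_mul_cancel_left₀ hMKL]

theorem transpose_mul_Rmat_inv_mul_comp_apply {a0 a1 a2 : ℝ} (h1 : lam1 a0 ≠ 0)
    (h2 : lam2 L a0 a1 ≠ 0) (h3 : lam3 K L a0 a1 a2 ≠ 0) (h4 : lam4 M K L a0 a1 a2 ≠ 0)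
    (hz : ∀ p, z p = 0 ∨ z p = 1)
    (hcard : ∀ j k, ((univ.filter fun l => z (j, k, l) = 1).card : ℝ) = (1 - π) * L)
    (φ : m → ℝ → ℝ) (i i' : m) :
    ((of fun p i => φ i (z p))ᵀ * (Rmat M K L a0 a1 a2)⁻¹ * of fun p i => φ i (z p)) i i' =
      M * K * L * ((lam1 a0)⁻¹ * (π * (φ i 0 * φ i' 0) + (1 - π) * (φ i 1 * φ i' 1))
        + ((lam4 M K L a0 a1 a2)⁻¹ - (lam1 a0)⁻¹)
          * (π * φ i 0 + (1 - π) * φ i 1) * (π * φ i' 0 + (1 - π) * φ i' 1)) := by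
  have hG : providerMean M K L * (of fun p i => φ i (z p)) =
      grandMean M K L * of fun p i => φ i (z p) :=
    Matrix.ext fun p i => (providerMean_mul_comp_apply hz hcard φ p i).trans
      (grandMean_mul_comp_apply hz hcard φ p i).symm
  rw [Matrix.mul_assoc, Rmat_inv_mul_of_providerMean_mul_eq h1 h2 h3 h4 hG, Matrix.mul_add,
    Matrix.mul_smul, Matrix.mul_smul, Matrix.add_apply, Matrix.smul_apply, Matrix.smul_apply,
    mul_apply, mul_apply]
  simp only [transpose_apply, of_apply, grandMean_mul_comp_apply hz hcard, ← sum_mul,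
    smul_eq_mul]
  rw [sum_comp_of_level1 hz hcard (fun t => φ i t * φ i' t), sum_comp_of_level1 hz hcard (φ i)]
  ring

end Level1Randomization

theorem inv_apply_one_one_fin_two {𝕜 : Type*} [Field 𝕜] (A : Matrix (Fin 2) (Fin 2) 𝕜) :
    A⁻¹ 1 1 = A 0 0 / A.det := by
  simp [Matrix.inv_def, adjugate_fin_two, Ring.inverse_eq_inv', div_eq_inv_mul]

/-- Theorem 2, randomization at level 1. -/
theorem model_based_variance_level1 (M K L : ℕ) (hM : 2 ≤ M) (hK : 2 ≤ K) (hL : 2 ≤ L)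
    (a0 a1 a2 : ℝ) (π ρc ρt : ℝ)
    (hπ : π ∈ Set.Ioo (0 : ℝ) 1) (hρc : ρc ≠ 0) (hρt : ρt ≠ 0)
    (z : Fin M × Fin K × Fin L → ℝ) (hz : ∀ p, z p = 0 ∨ z p = 1)
    (hcard : ∀ j k, ((Finset.univ.filter fun l => z (j, k, l) = 1).card : ℝ) =
      (1 - π) * (L : ℝ))
    (h1 : 0 < lam1 a0) (h2 : 0 < lam2 L a0 a1)
    (h3 : 0 < lam3 K L a0 a1 a2) (h4 : 0 < lam4 M K L a0 a1 a2)
    (P : Matrix (Fin M × Fin K × Fin L) (Fin M × Fin K × Fin L) ℝ)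
    (hP : P = Matrix.diagonal fun p => if z p = 0 then 1 / ρc else 1 / ρt)
    (X : Matrix (Fin M × Fin K × Fin L) (Fin 2) ℝ)
    (hX : X = Matrix.of fun p i => if i = 0 then 1 else z p)
    (Sig1 : Matrix (Fin 2) (Fin 2) ℝ)
    (hSig1 : Sig1 = Xᵀ * P * (Rmat M K L a0 a1 a2)⁻¹ * P * X) :
    IsUnit Sig1 ∧
    Sig1⁻¹ 1 1 = lam1 a0 / ((M : ℝ) * (K : ℝ) * (L : ℝ)) *
        (ρc ^ 2 / π + ρt ^ 2 / (1 - π))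
      + (lam4 M K L a0 a1 a2 - lam1 a0) * (ρc - ρt) ^ 2 /
        ((M : ℝ) * (K : ℝ) * (L : ℝ)) := by
  obtain ⟨hπ0, hπ1⟩ := hπ
  set φ : Fin 2 → ℝ → ℝ := fun i t =>
    (if t = 0 then 1 / ρc else 1 / ρt) * (if i = 0 then 1 else t)
  have hPX : P * X = of fun p i => φ i (z p) := by
    ext p i
    simp [hP, hX, φ, diagonal_mul]
  have hSig : Sig1 = (P * X)ᵀ * (Rmat M K L a0 a1 a2)⁻¹ * (P * X) := by
    rw [hSig1, transpose_mul, hP, diagonal_transpose]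
    simp only [Matrix.mul_assoc]
  have hSig_apply := transpose_mul_Rmat_inv_mul_comp_apply h1.ne' h2.ne' h3.ne' h4.ne' hz hcard φ
  rw [← hPX, ← hSig] at hSig_apply
  have hdet : Sig1.det =
      (M * K * L) ^ 2 * π * (1 - π) / (ρc ^ 2 * ρt ^ 2 * lam1 a0 * lam4 M K L a0 a1 a2) := by
    rw [det_fin_two, hSig_apply, hSig_apply, hSig_apply, hSig_apply]
    simp only [φ, one_div, Fin.isValue, mul_ite, mul_one, ite_mul, ↓reduceIte, one_ne_zero,
      mul_zero, zero_add, zero_mul]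
    field_simp
    ring
  have hdet0 : Sig1.det ≠ 0 := by
    rw [hdet]
    have : 0 < 1 - π := sub_pos.mpr hπ1
    positivity
  refine ⟨(isUnit_iff_isUnit_det _).mpr hdet0.isUnit, ?_⟩
  rw [inv_apply_one_one_fin_two, hdet, hSig_apply]
  simp only [φ, one_div, Fin.isValue, mul_ite, mul_one, ite_mul, ↓reduceIte, one_ne_zero]
  field_simp
  ring
end
end

section
/- (Theorem 3, randomization at level 3) Let π ∈ (0,1) be such that πM is an integer, let w ∈ {0,1}^M have exactly (1−π)M coordinates equal to 1, and let z = w ⊗ 1_{KL} ∈ ℝ^{MKL} (so z_{jkl} = w_j). Let ρc, ρt be nonzero real numbers, let P be the MKL×MKL diagonal matrix whose (j,k,l) diagonal entry is 1/ρc if z_{jkl} = 0 and 1/ρt if z_{jkl} = 1, and let X be the MKL×2 matrix with first column 1_{MKL} and second column z. Assume λ1, λ2, λ3, λ4 > 0 and define M1 = Xᵀ P² X and M0 = Xᵀ P R P X. Then M1 is invertible and the lower-right entry of the sandwich matrix M1^{−1} M0 M1^{−1} equals (λ3/(MKL)) · (ρc²/π + ρt²/(1−π)) + (λ4 − λ3)(ρc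 − ρt)²/(MKL), i.e., it coincides with the lower-right entry of (Xᵀ P R^{−1} P X)^{−1}. -/
open Matrix Polynomial Finset

noncomputable section

/-!
The nested averaging projections `N₀ = 1`, `N₁` (over units), `N₂` (over providers and units)
and `N₃` (over everything) satisfy `Nᵢ Nⱼ = N_max(i,j)`, so the differences `Eᵢ = Nᵢ₋₁ - Nᵢ`
form a complete family of orthogonal idempotents and `R = ∑ λᵢ Eᵢ` is invertible.

The weighted design `Y = P X` is constant on facilities, so `R Y = λ₃ Y + (λ₄ - λ₃) N₃ Y`, and its
columns span the constant vector (`Y t = 1` for `t = (ρc, ρt - ρc)`); hence `R Y = Y B` for a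
`2 × 2` matrix `B`. Whenever `R` leaves the column space of the design invariant, the sandwich
`G⁻¹ (Yᵀ R Y) G⁻¹` and the model-based `(Yᵀ R⁻¹ Y)⁻¹` both equal
`B G⁻¹ = λ₃ G⁻¹ + (λ₄ - λ₃) t tᵀ / MKL`, where `G = Yᵀ Y` is an explicit `2 × 2` matrix.
-/

open scoped Kronecker

theorem CompleteOrthogonalIdempotents.of_flag {A : Type*} [Ring A] {n : ℕ} {P : ℕ → A}
    (h0 : P 0 = 1) (hn : P n = 0) (hP : ∀ i j, P i * P j = P (max i j)) :
    CompleteOrthogonalIdempotents fun i : Fin n => P i - P (i + 1) := by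
  rw [CompleteOrthogonalIdempotents.iff_ortho_complete]
  refine ⟨fun i j hij => ?_, ?_⟩
  · simp only [sub_mul, mul_sub, hP]
    rcases Nat.lt_or_gt_of_ne (Fin.val_ne_of_ne hij) with h | h
    · rw [max_eq_right h.le, max_eq_right (by omega : (i : ℕ) ≤ j + 1),
        max_eq_right (by omega : (i : ℕ) + 1 ≤ j), max_eq_right (by omega : (i : ℕ) + 1 ≤ j + 1)]
      abel
    · rw [max_eq_left h.le, max_eq_left (by omega : (j : ℕ) + 1 ≤ i),
        max_eq_left (by omega : (j : ℕ) ≤ i + 1), max_eq_left (by omega : (j : ℕ) + 1 ≤ i + 1)]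
      abel
  · rw [Fin.sum_univ_eq_sum_range (fun i => P i - P (i + 1)), Finset.sum_range_sub', h0, hn,
      sub_zero]

theorem CompleteOrthogonalIdempotents.sum_smul_mul_sum_smul {𝕜 A I : Type*} [CommSemiring 𝕜]
    [Semiring A] [Algebra 𝕜 A] [Fintype I] {e : I → A} (he : CompleteOrthogonalIdempotents e)
    (a b : I → 𝕜) : (∑ i, a i • e i) * (∑ i, b i • e i) = ∑ i, (a i * b i) • e i := by
  classical
  simp only [Finset.sum_mul_sum, smul_mul_smul_comm, he.mul_eq, smul_ite, smul_zero,
    Finset.sum_ite_eq, Finset.mem_univ, if_true]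

theorem CompleteOrthogonalIdempotents.isUnit_sum_smul {𝕜 A I : Type*} [Field 𝕜]
    [Semiring A] [Algebra 𝕜 A] [Fintype I] {e : I → A} (he : CompleteOrthogonalIdempotents e)
    {a : I → 𝕜} (ha : ∀ i, a i ≠ 0) : IsUnit (∑ i, a i • e i) := by
  have hinv : ∀ b : I → 𝕜, (∀ i, b i ≠ 0) →
      (∑ i, b i • e i) * (∑ i, (b i)⁻¹ • e i) = 1 := fun b hb => by
    simp only [he.sum_smul_mul_sum_smul, mul_inv_cancel₀ (hb _), one_smul, he.complete]
  refine ⟨⟨_, _, hinv a ha, ?_⟩, rfl⟩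
  simpa using hinv (fun i => (a i)⁻¹) fun i => inv_ne_zero (ha i)

section Averaging

variable {𝕜 : Type*} [Field 𝕜]

variable (𝕜) in
def avgMatrix (n : Type*) [Fintype n] : Matrix n n 𝕜 := (Fintype.card n : 𝕜)⁻¹ • vecMulVec 1 1

theorem avgMatrix_mul_self [CharZero 𝕜] (n : Type*) [Fintype n] [Nonempty n] :
    avgMatrix 𝕜 n * avgMatrix 𝕜 n = avgMatrix 𝕜 n := by
  have : (Fintype.card n : 𝕜) ≠ 0 := Nat.cast_ne_zero.2 Fintype.card_ne_zero
  rw [avgMatrix, smul_mul_smul_comm, vecMulVec_mul_vecMulVec, one_dotProduct_one, vecMulVec_smul,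
    smul_smul, mul_assoc, inv_mul_cancel₀ this, mul_one]

theorem avgMatrix_kronecker (m n : Type*) [Fintype m] [Fintype n] :
    avgMatrix 𝕜 m ⊗ₖ avgMatrix 𝕜 n = avgMatrix 𝕜 (m × n) := by
  ext p q
  simp [avgMatrix, Fintype.card_prod, mul_comm]

theorem avgMatrix_mul_eq_mul {n m : Type*} [Fintype n] [Fintype m] {Y : Matrix n m 𝕜}
    {t : m → 𝕜} (ht : Y *ᵥ t = 1) :
    avgMatrix 𝕜 n * Y = Y * ((Fintype.card n : 𝕜)⁻¹ • vecMulVec t (t ᵥ* (Yᵀ * Y))) := by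
  rw [avgMatrix, Matrix.smul_mul, Matrix.mul_smul, vecMulVec_mul, mul_vecMulVec, ht,
    ← vecMul_vecMul, vecMul_transpose, ht]

theorem one_kronecker_avgMatrix_mul_of_fst [CharZero 𝕜] {a n m : Type*} [Fintype a]
    [DecidableEq a] [Fintype n] [Nonempty n] (Z : Matrix a m 𝕜) :
    ((1 : Matrix a a 𝕜) ⊗ₖ avgMatrix 𝕜 n) * Matrix.of (fun (p : a × n) i => Z p.1 i) =
      Matrix.of fun p i => Z p.1 i := by
  have : (Fintype.card n : 𝕜) ≠ 0 := Nat.cast_ne_zero.2 Fintype.card_ne_zero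
  ext p i
  simp [mul_apply, one_apply, avgMatrix, Fintype.sum_prod_type, ite_mul]

end Averaging

section NestedAveraging

variable {𝕜 : Type*} [Field 𝕜] {a b c : Type*} [Fintype a] [Fintype b] [Fintype c]
  [DecidableEq a] [DecidableEq b] [DecidableEq c]

variable (𝕜) in
def avgFrom (k : ℕ) (n : Type*) [Fintype n] [DecidableEq n] (i : ℕ) : Matrix n n 𝕜 :=
  if i < k then 1 else avgMatrix 𝕜 n

theorem avgFrom_mul_avgFrom [CharZero 𝕜] {n : Type*} [Fintype n] [DecidableEq n] [Nonempty n]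
    (k i j : ℕ) : avgFrom 𝕜 k n i * avgFrom 𝕜 k n j = avgFrom 𝕜 k n (max i j) := by
  unfold avgFrom
  split_ifs <;> first | omega | simp [avgMatrix_mul_self]

/-- `nestedAvg i` averages over the last `i` coordinates; `nestedAvg 4 = 0` closes the flag. -/
def nestedAvg (𝕜 a b c : Type*) [Field 𝕜] [Fintype a] [Fintype b] [Fintype c] [DecidableEq a]
    [DecidableEq b] [DecidableEq c] (i : ℕ) : Matrix (a × b × c) (a × b × c) 𝕜 :=
  if i < 4 then avgFrom 𝕜 3 a i ⊗ₖ (avgFrom 𝕜 2 b i ⊗ₖ avgFrom 𝕜 1 c i) else 0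

theorem nestedAvg_zero : nestedAvg 𝕜 a b c 0 = 1 := by
  simp [nestedAvg, avgFrom]

theorem nestedAvg_one : nestedAvg 𝕜 a b c 1 = 1 ⊗ₖ (1 ⊗ₖ avgMatrix 𝕜 c) := by
  simp [nestedAvg, avgFrom]

theorem nestedAvg_two : nestedAvg 𝕜 a b c 2 = 1 ⊗ₖ avgMatrix 𝕜 (b × c) := by
  simp [nestedAvg, avgFrom, avgMatrix_kronecker]

theorem nestedAvg_three : nestedAvg 𝕜 a b c 3 = avgMatrix 𝕜 (a × b × c) := by
  simp [nestedAvg, avgFrom, avgMatrix_kronecker]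

theorem nestedAvg_four : nestedAvg 𝕜 a b c 4 = 0 := by
  simp [nestedAvg]

theorem nestedAvg_mul_nestedAvg [CharZero 𝕜] [Nonempty a] [Nonempty b] [Nonempty c] (i j : ℕ) :
    nestedAvg 𝕜 a b c i * nestedAvg 𝕜 a b c j = nestedAvg 𝕜 a b c (max i j) := by
  unfold nestedAvg
  split_ifs <;> first | omega | simp [← mul_kronecker_mul, avgFrom_mul_avgFrom]

theorem completeOrthogonalIdempotents_nestedAvg [CharZero 𝕜] [Nonempty a] [Nonempty b]
    [Nonempty c] : CompleteOrthogonalIdempotents fun i : Fin 4 =>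
      nestedAvg 𝕜 a b c i - nestedAvg 𝕜 a b c (i + 1) :=
  .of_flag nestedAvg_zero nestedAvg_four nestedAvg_mul_nestedAvg

end NestedAveraging

section Correlation

variable {M K L : ℕ} [NeZero M] [NeZero K] [NeZero L]

local notation "N" => nestedAvg ℝ (Fin M) (Fin K) (Fin L)

theorem Rmat_eq_nestedAvg (a0 a1 a2 : ℝ) :
    Rmat M K L a0 a1 a2 = lam1 a0 • (1 - N 1) + lam2 L a0 a1 • (N 1 - N 2)
      + lam3 K L a0 a1 a2 • (N 2 - N 3) + lam4 M K L a0 a1 a2 • N 3 := by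
  have hM : (M : ℝ) ≠ 0 := NeZero.ne _
  have hK : (K : ℝ) ≠ 0 := NeZero.ne _
  have hL : (L : ℝ) ≠ 0 := NeZero.ne _
  rw [nestedAvg_one, nestedAvg_two, nestedAvg_three]
  ext ⟨j, k, l⟩ ⟨j', k', l'⟩
  by_cases hj : j = j' <;> by_cases hk : k = k' <;> by_cases hl : l = l' <;>
    simp [Rmat, avgMatrix, one_apply, hj, hk, hl, lam1, lam2, lam3, lam4] <;> field_simp <;> ring

theorem Rmat_eq_sum_smul (a0 a1 a2 : ℝ) :
    Rmat M K L a0 a1 a2 = ∑ i : Fin 4,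
      ![lam1 a0, lam2 L a0 a1, lam3 K L a0 a1 a2, lam4 M K L a0 a1 a2] i • (N i - N (i + 1)) := by
  simp [Rmat_eq_nestedAvg, Fin.sum_univ_four, nestedAvg_zero, nestedAvg_four]

theorem isUnit_Rmat {a0 a1 a2 : ℝ} (h1 : lam1 a0 ≠ 0) (h2 : lam2 L a0 a1 ≠ 0)
    (h3 : lam3 K L a0 a1 a2 ≠ 0) (h4 : lam4 M K L a0 a1 a2 ≠ 0) :
    IsUnit (Rmat M K L a0 a1 a2) := by
  rw [Rmat_eq_sum_smul]
  refine completeOrthogonalIdempotents_nestedAvg.isUnit_sum_smul fun i => ?_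
  fin_cases i <;> assumption

theorem Rmat_mul_eq_of_nestedAvg_mul {m : Type*} (a0 a1 a2 : ℝ)
    {Y : Matrix (Fin M × Fin K × Fin L) m ℝ} (hY : N 2 * Y = Y) :
    Rmat M K L a0 a1 a2 * Y = lam3 K L a0 a1 a2 • Y
      + (lam4 M K L a0 a1 a2 - lam3 K L a0 a1 a2) • (avgMatrix ℝ _ * Y) := by
  have h1 : N 1 * Y = Y := by
    rw [← hY, ← Matrix.mul_assoc, nestedAvg_mul_nestedAvg, max_eq_right (by norm_num)]
  simp only [Rmat_eq_nestedAvg, Matrix.add_mul, Matrix.smul_mul, Matrix.sub_mul, Matrix.one_mul,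
    h1, hY, nestedAvg_three, sub_self, smul_zero, zero_add]
  rw [smul_sub, sub_smul]
  abel!

end Correlation

theorem Matrix.transpose_mul_diagonal_mul_mul_diagonal_mul {𝕜 n m : Type*} [CommRing 𝕜]
    [Fintype n] [DecidableEq n] (X : Matrix n m 𝕜) (d : n → 𝕜) (S : Matrix n n 𝕜) :
    Xᵀ * diagonal d * S * diagonal d * X = (diagonal d * X)ᵀ * S * (diagonal d * X) := by
  rw [transpose_mul, diagonal_transpose]
  simp only [Matrix.mul_assoc]

section Regression

variable {𝕜 n m : Type*} [Fintype n] [Fintype m] [DecidableEq m]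

theorem Matrix.inv_mul_mul_inv_eq_mul_inv_of_mul_eq_mul [CommRing 𝕜] (V : Matrix m n 𝕜)
    {Y : Matrix n m 𝕜} {R : Matrix n n 𝕜} {B : Matrix m m 𝕜} (hVY : IsUnit (V * Y))
    (hRY : R * Y = Y * B) : (V * Y)⁻¹ * (V * R * Y) * (V * Y)⁻¹ = B * (V * Y)⁻¹ := by
  calc (V * Y)⁻¹ * (V * R * Y) * (V * Y)⁻¹ = (V * Y)⁻¹ * (V * Y) * B * (V * Y)⁻¹ := by
        rw [Matrix.mul_assoc V R Y, hRY]; simp only [Matrix.mul_assoc]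
    _ = B * (V * Y)⁻¹ := by
        rw [Matrix.nonsing_inv_mul _ ((isUnit_iff_isUnit_det _).1 hVY), Matrix.one_mul]

theorem Matrix.inv_mul_inv_mul_eq_mul_inv_of_mul_eq_mul [CommRing 𝕜] [DecidableEq n]
    (V : Matrix m n 𝕜) {Y : Matrix n m 𝕜} {R : Matrix n n 𝕜} {B : Matrix m m 𝕜} (hR : IsUnit R)
    (hVY : IsUnit (V * Y)) (hRY : R * Y = Y * B) : (V * R⁻¹ * Y)⁻¹ = B * (V * Y)⁻¹ := by
  refine Matrix.inv_eq_right_inv ?_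
  have hY : R⁻¹ * Y * B = Y := by
    rw [Matrix.mul_assoc, ← hRY, ← Matrix.mul_assoc,
      Matrix.nonsing_inv_mul _ ((isUnit_iff_isUnit_det _).1 hR), Matrix.one_mul]
  calc V * R⁻¹ * Y * (B * (V * Y)⁻¹) = V * (R⁻¹ * Y * B) * (V * Y)⁻¹ := by
        simp only [Matrix.mul_assoc]
    _ = 1 := by rw [hY, Matrix.mul_nonsing_inv _ ((isUnit_iff_isUnit_det _).1 hVY)]

theorem mul_eq_mul_of_mul_eq_smul_add_smul_avgMatrix_mul [Field 𝕜] {R : Matrix n n 𝕜}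
    {Y : Matrix n m 𝕜} {t : m → 𝕜} (ht : Y *ᵥ t = 1) {c d : 𝕜}
    (hRY : R * Y = c • Y + d • (avgMatrix 𝕜 n * Y)) :
    R * Y = Y * (c • 1 + (d / Fintype.card n) • vecMulVec t (t ᵥ* (Yᵀ * Y))) := by
  rw [hRY, avgMatrix_mul_eq_mul ht]
  simp only [Matrix.mul_add, Matrix.mul_smul, Matrix.mul_one, smul_smul, div_eq_mul_inv]

theorem smul_one_add_smul_vecMulVec_mul_inv [Field 𝕜] {G : Matrix m m 𝕜} (hG : IsUnit G)
    (c d : 𝕜) (t : m → 𝕜) :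
    (c • 1 + d • vecMulVec t (t ᵥ* G)) * G⁻¹ = c • G⁻¹ + d • vecMulVec t t := by
  rw [Matrix.add_mul, Matrix.smul_mul, Matrix.one_mul, Matrix.smul_mul, vecMulVec_mul,
    vecMul_vecMul, Matrix.mul_nonsing_inv _ ((isUnit_iff_isUnit_det _).1 hG), vecMul_one]

end Regression

theorem isUnit_and_inv_one_one_of_add_fin_two {𝕜 : Type*} [Field 𝕜] {A B : 𝕜} (hA : A ≠ 0)
    (hB : B ≠ 0) : IsUnit !![A + B, B; B, B] ∧ (!![A + B, B; B, B])⁻¹ 1 1 = A⁻¹ + B⁻¹ := by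
  have hdet : (!![A + B, B; B, B]).det = A * B := by rw [det_fin_two_of]; ring
  refine ⟨(isUnit_iff_isUnit_det _).2 (hdet ▸ (mul_ne_zero hA hB).isUnit), ?_⟩
  rw [Matrix.inv_def, hdet, adjugate_fin_two_of]
  simp only [Ring.inverse_eq_inv', Matrix.smul_apply, of_apply, cons_val', cons_val_one,
    cons_val_fin_one, smul_eq_mul]
  field_simp
  ring

theorem sum_comp_of_forall_eq_zero_or_eq_one {ι : Type*} [Fintype ι] {w : ι → ℝ}
    (hw : ∀ j, w j = 0 ∨ w j = 1) (f : ℝ → ℝ) :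
    ∑ j, f (w j) = (Fintype.card ι - #{j | w j = 1}) * f 0 + #{j | w j = 1} * f 1 := by
  classical
  have hf : ∀ j, f (w j) = f 0 + (f 1 - f 0) * (if w j = 1 then 1 else 0) := fun j => by
    rcases hw j with h | h <;> simp [h]
  simp only [hf, sum_add_distrib, ← mul_sum, sum_boole, sum_const, card_univ, nsmul_eq_mul]
  ring

theorem sum_comp_fst_of_forall_eq_zero_or_eq_one {ι κ : Type*} [Fintype ι] [Fintype κ]
    {w : ι → ℝ} (hw : ∀ j, w j = 0 ∨ w j = 1) (f : ℝ → ℝ) :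
    ∑ p : ι × κ, f (w p.1) =
      Fintype.card κ * ((Fintype.card ι - #{j | w j = 1}) * f 0 + #{j | w j = 1} * f 1) := by
  rw [Fintype.sum_prod_type]
  simp only [sum_const, card_univ, nsmul_eq_mul, ← mul_sum, sum_comp_of_forall_eq_zero_or_eq_one hw]

section Design

variable {a : Type*}

def weightedDesign (b c : Type*) (w : a → ℝ) (ρc ρt : ℝ) : Matrix (a × b × c) (Fin 2) ℝ :=
  Matrix.of fun p i => (if w p.1 = 0 then 1 / ρc else 1 / ρt) * (if i = 0 then 1 else w p.1)

theorem diagonal_mul_eq_weightedDesign {b c : Type*} [Fintype a] [DecidableEq a] [Fintype b]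
    [DecidableEq b] [Fintype c] [DecidableEq c] (w : a → ℝ) (ρc ρt : ℝ) :
    diagonal (fun p : a × b × c => if w p.1 = 0 then 1 / ρc else 1 / ρt) *
      Matrix.of (fun (p : a × b × c) (i : Fin 2) => if i = 0 then 1 else w p.1) =
        weightedDesign b c w ρc ρt := by
  ext p i
  simp [weightedDesign]

theorem weightedDesign_mulVec (b c : Type*) {w : a → ℝ} (hw : ∀ j, w j = 0 ∨ w j = 1)
    {ρc ρt : ℝ} (hρc : ρc ≠ 0) (hρt : ρt ≠ 0) :
    weightedDesign b c w ρc ρt *ᵥ ![ρc, ρt - ρc] = 1 := by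
  ext p
  rcases hw p.1 with h | h
  · simp [weightedDesign, mulVec, dotProduct, h, hρc]
  · simp only [weightedDesign, mulVec, dotProduct, of_apply, h, one_ne_zero, ↓reduceIte, one_div,
      Fin.sum_univ_two, cons_val_zero, cons_val_one, cons_val_fin_one, Pi.one_apply]
    field_simp
    ring

theorem nestedAvg_two_mul_weightedDesign {b c : Type*} [Fintype a] [DecidableEq a] [Fintype b]
    [DecidableEq b] [Nonempty b] [Fintype c] [DecidableEq c] [Nonempty c] (w : a → ℝ)
    (ρc ρt : ℝ) :
    nestedAvg ℝ a b c 2 * weightedDesign b c w ρc ρt = weightedDesign b c w ρc ρt := by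
  rw [nestedAvg_two]
  exact one_kronecker_avgMatrix_mul_of_fst
    (Matrix.of fun j i => (if w j = 0 then 1 / ρc else 1 / ρt) * (if i = 0 then 1 else w j))

theorem transpose_weightedDesign_mul_weightedDesign (b c : Type*) [Fintype a] [Fintype b]
    [Fintype c] {w : a → ℝ} (hw : ∀ j, w j = 0 ∨ w j = 1) (ρc ρt : ℝ) :
    (weightedDesign b c w ρc ρt)ᵀ * weightedDesign b c w ρc ρt =
      let A := Fintype.card (b × c) * (Fintype.card a - #{j | w j = 1}) / ρc ^ 2
      let B := Fintype.card (b × c) * #{j | w j = 1} / ρt ^ 2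
      !![A + B, B; B, B] := by
  ext i i'
  simp only [Matrix.mul_apply, transpose_apply, weightedDesign, of_apply]
  rw [sum_comp_fst_of_forall_eq_zero_or_eq_one hw fun x =>
    (if x = 0 then 1 / ρc else 1 / ρt) * (if i = 0 then 1 else x) *
      ((if x = 0 then 1 / ρc else 1 / ρt) * (if i' = 0 then 1 else x))]
  fin_cases i <;> fin_cases i' <;> simp <;> ring

theorem isUnit_gram_weightedDesign_and_inv_one_one (b c : Type*) [Fintype a] [Nonempty a]
    [Fintype b] [Nonempty b] [Fintype c] [Nonempty c] {w : a → ℝ} (hw : ∀ j, w j = 0 ∨ w j = 1)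
    {π : ℝ} (hπ : π ∈ Set.Ioo (0 : ℝ) 1)
    (hcard : (#{j | w j = 1} : ℝ) = (1 - π) * Fintype.card a) {ρc ρt : ℝ} (hρc : ρc ≠ 0)
    (hρt : ρt ≠ 0) :
    let G := (weightedDesign b c w ρc ρt)ᵀ * weightedDesign b c w ρc ρt
    IsUnit G ∧ G⁻¹ 1 1 = (ρc ^ 2 / π + ρt ^ 2 / (1 - π)) / Fintype.card (a × b × c) := by
  have hG := transpose_weightedDesign_mul_weightedDesign b c hw ρc ρt
  rw [hcard, show (Fintype.card a : ℝ) - (1 - π) * Fintype.card a = π * Fintype.card a by ring]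
    at hG
  have ha : (Fintype.card a : ℝ) ≠ 0 := Nat.cast_ne_zero.2 Fintype.card_ne_zero
  have hbc : (Fintype.card (b × c) : ℝ) ≠ 0 := Nat.cast_ne_zero.2 Fintype.card_ne_zero
  have hπ1 : 1 - π ≠ 0 := sub_ne_zero.2 hπ.2.ne'
  obtain ⟨hunit, hinv⟩ := isUnit_and_inv_one_one_of_add_fin_two
    (div_ne_zero (mul_ne_zero hbc (mul_ne_zero hπ.1.ne' ha)) (pow_ne_zero 2 hρc))
    (div_ne_zero (mul_ne_zero hbc (mul_ne_zero hπ1 ha)) (pow_ne_zero 2 hρt))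
  refine ⟨hG ▸ hunit, ?_⟩
  rw [hG, hinv, Fintype.card_prod a, Nat.cast_mul]
  field_simp

end Design

/-- Theorem 3, randomization at level 3. -/
theorem sandwich_variance_level3 (M K L : ℕ) (hM : 2 ≤ M) (hK : 2 ≤ K) (hL : 2 ≤ L)
    (a0 a1 a2 : ℝ) (π ρc ρt : ℝ)
    (hπ : π ∈ Set.Ioo (0 : ℝ) 1) (hρc : ρc ≠ 0) (hρt : ρt ≠ 0)
    (w : Fin M → ℝ) (hw : ∀ j, w j = 0 ∨ w j = 1)
    (hcard : ((Finset.univ.filter fun j => w j = 1).card : ℝ) = (1 - π) * (M : ℝ))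
    (h1 : 0 < lam1 a0) (h2 : 0 < lam2 L a0 a1)
    (h3 : 0 < lam3 K L a0 a1 a2) (h4 : 0 < lam4 M K L a0 a1 a2)
    (P : Matrix (Fin M × Fin K × Fin L) (Fin M × Fin K × Fin L) ℝ)
    (hP : P = Matrix.diagonal fun p => if w p.1 = 0 then 1 / ρc else 1 / ρt)
    (X : Matrix (Fin M × Fin K × Fin L) (Fin 2) ℝ)
    (hX : X = Matrix.of fun p i => if i = 0 then 1 else w p.1)
    (M1 M0 : Matrix (Fin 2) (Fin 2) ℝ)
    (hM1 : M1 = Xᵀ * (P * P) * X)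
    (hM0 : M0 = Xᵀ * P * Rmat M K L a0 a1 a2 * P * X) :
    IsUnit M1 ∧
    (M1⁻¹ * M0 * M1⁻¹) 1 1 = lam3 K L a0 a1 a2 / ((M : ℝ) * (K : ℝ) * (L : ℝ)) *
        (ρc ^ 2 / π + ρt ^ 2 / (1 - π))
      + (lam4 M K L a0 a1 a2 - lam3 K L a0 a1 a2) * (ρc - ρt) ^ 2 /
        ((M : ℝ) * (K : ℝ) * (L : ℝ)) ∧
    (M1⁻¹ * M0 * M1⁻¹) 1 1 = (Xᵀ * P * (Rmat M K L a0 a1 a2)⁻¹ * P * X)⁻¹ 1 1 := by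
  have : NeZero M := ⟨by omega⟩
  have : NeZero K := ⟨by omega⟩
  have : NeZero L := ⟨by omega⟩
  set Y := weightedDesign (Fin K) (Fin L) w ρc ρt
  have hPX : ∀ S : Matrix (Fin M × Fin K × Fin L) (Fin M × Fin K × Fin L) ℝ,
      Xᵀ * P * S * P * X = Yᵀ * S * Y := fun S => by
    rw [hP, hX, transpose_mul_diagonal_mul_mul_diagonal_mul, diagonal_mul_eq_weightedDesign]
  have hM1Y : M1 = Yᵀ * Y := by
    rw [hM1, ← Matrix.mul_one Yᵀ, ← hPX]; simp only [Matrix.mul_assoc, Matrix.one_mul]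
  obtain ⟨hGunit, hGinv⟩ := isUnit_gram_weightedDesign_and_inv_one_one (Fin K) (Fin L) hw hπ
    (by rwa [Fintype.card_fin]) hρc hρt
  have hRY := mul_eq_mul_of_mul_eq_smul_add_smul_avgMatrix_mul
    (weightedDesign_mulVec (Fin K) (Fin L) hw hρc hρt)
    (Rmat_mul_eq_of_nestedAvg_mul a0 a1 a2 (nestedAvg_two_mul_weightedDesign w ρc ρt))
  have hsandwich : M1⁻¹ * M0 * M1⁻¹ = lam3 K L a0 a1 a2 • (Yᵀ * Y)⁻¹ +
      ((lam4 M K L a0 a1 a2 - lam3 K L a0 a1 a2) / Fintype.card (Fin M × Fin K × Fin L)) •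
        vecMulVec ![ρc, ρt - ρc] ![ρc, ρt - ρc] := by
    rw [hM1Y, hM0, hPX, inv_mul_mul_inv_eq_mul_inv_of_mul_eq_mul _ hGunit hRY,
      smul_one_add_smul_vecMulVec_mul_inv hGunit]
  refine ⟨hM1Y ▸ hGunit, ?_, ?_⟩
  · rw [hsandwich, Matrix.add_apply, Matrix.smul_apply, Matrix.smul_apply, vecMulVec_apply, hGinv]
    simp only [cons_val_one, cons_val_fin_one, Fintype.card_prod, Fintype.card_fin, Nat.cast_mul,
      smul_eq_mul]
    ring
  · rw [hPX, inv_mul_inv_mul_eq_mul_inv_of_mul_eq_mul _ (isUnit_Rmat h1.ne' h2.ne' h3.ne' h4.ne')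
      hGunit hRY, ← inv_mul_mul_inv_eq_mul_inv_of_mul_eq_mul _ hGunit hRY, ← hPX, ← hM0, hM1Y]
end
end
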